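/- Let X and Y be independent random variables and k̄_X, k̄_Y bounded centred kernels (i.e., E[k̄_X(X, x)] = 0 and E[k̄_Y(Y, y)] = 0 for every fixed x, y). Then for i.i.d. pairs Z₁ = (X₁,Y₁), Z₂ = (X₂,Y₂) with the product law, E[k̄_X(X₁,X₂)·k̄_Y(Y₁,Y₂)] = 0, i.e., the population HSIC kernel has mean zero under independence. -/
import Mathlib


open MeasureTheory

/-- The population HSIC kernel (product of centred kernels) has mean zero for
i.i.d. pairs drawn from the product law `P_X ⊗ P_Y`. -/
theorem hsic_kernel_mean_zero_under_independence
    {𝒳 𝒴 : Type*} [MeasurableSpace 𝒳] [MeasurableSpace 𝒴]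
    (PX : Measure 𝒳) (PY : Measure 𝒴)
    [IsProbabilityMeasure PX] [IsProbabilityMeasure PY]
    (kXbar : 𝒳 → 𝒳 → ℝ) (kYbar : 𝒴 → 𝒴 → ℝ)
    (hkXmeas : Measurable (Function.uncurry kXbar))
    (hkYmeas : Measurable (Function.uncurry kYbar))
    (CX CY : ℝ) (hkXbd : ∀ x x', |kXbar x x'| ≤ CX)
    (hkYbd : ∀ y y', |kYbar y y'| ≤ CY)
    (hkXsymm : ∀ x x', kXbar x x' = kXbar x' x)
    (hkYsymm : ∀ y y', kYbar y y' = kYbar y' y)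
    (hkXcentred : ∀ x, ∫ x', kXbar x' x ∂PX = 0)
    (hkYcentred : ∀ y, ∫ y', kYbar y' y ∂PY = 0) :
    ∫ z, kXbar z.1.1 z.2.1 * kYbar z.1.2 z.2.2
      ∂((PX.prod PY).prod (PX.prod PY)) = 0 := by
  have hm : Measurable fun z : (𝒳 × 𝒴) × (𝒳 × 𝒴) =>
      kXbar z.1.1 z.2.1 * kYbar z.1.2 z.2.2 :=
    (hkXmeas.comp ((measurable_fst.comp measurable_fst).prodMk
        (measurable_fst.comp measurable_snd))).mul
      (hkYmeas.comp ((measurable_snd.comp measurable_fst).prodMk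
        (measurable_snd.comp measurable_snd)))
  have hint : Integrable (fun z : (𝒳 × 𝒴) × (𝒳 × 𝒴) =>
      kXbar z.1.1 z.2.1 * kYbar z.1.2 z.2.2) ((PX.prod PY).prod (PX.prod PY)) := by
    refine (integrable_const (CX * CY)).mono' hm.aestronglyMeasurable
      (Filter.Eventually.of_forall fun z => ?_)
    rw [Real.norm_eq_abs, abs_mul]
    exact mul_le_mul (hkXbd z.1.1 z.2.1) (hkYbd z.1.2 z.2.2)
      (abs_nonneg (kYbar z.1.2 z.2.2))
      ((abs_nonneg (kXbar z.1.1 z.2.1)).trans (hkXbd z.1.1 z.2.1))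
  rw [MeasureTheory.integral_prod _ hint]
  have h0 : ∀ z1 : 𝒳 × 𝒴,
      ∫ z2, kXbar z1.1 z2.1 * kYbar z1.2 z2.2 ∂(PX.prod PY) = 0 := by
    intro z1
    rw [MeasureTheory.integral_prod_mul]
    have hx : ∫ x2, kXbar z1.1 x2 ∂PX = 0 := by
      simp_rw [fun x2 => hkXsymm z1.1 x2]
      exact hkXcentred z1.1
    rw [hx, zero_mul]
  simp [h0]
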